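/- arXiv:1104.4419 — 6 statements merged into one kernel-verified Lean document; each statement's English description precedes it below -/
import Mathlib

section
/- For every integer n ≥ 1, the quantity σ(n) defined by the equation e^n/2 = Σ_{k=0}^{n-1} n^k/k! + (1/3 + σ(n))·(n^n/n!) satisfies: σ(n) > 0, σ(n+1) < σ(n) for all n ≥ 1, and σ(n) → 0 as n → ∞. (Equivalently, σ(n) = (n!/n^n)·(e^n/2 − Σ_{k=0}^{n-1} n^k/k!) − 1/3 tends monotonically decreasing to zero.) -/
/-- Szegő's function `σ(n)`, defined by
`e^n/2 = Σ_{k=0}^{n-1} n^k/k! + (1/3 + σ(n)) · n^n/n!`, i.e.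
`σ(n) = (n!/n^n) · (e^n/2 − Σ_{k=0}^{n-1} n^k/k!) − 1/3`. -/
noncomputable def sigmaSzego (n : ℕ) : ℝ :=
  ((n.factorial : ℝ) / (n : ℝ) ^ n) *
      (Real.exp n / 2 - ∑ k ∈ Finset.range n, (n : ℝ) ^ k / (k.factorial : ℝ)) - 1 / 3

/-!
For `w > 0` let `x = (e^w - 1 - w) / (e^w - 1)` and `y = (w e^w - e^w + 1) / (e^w - 1)`. Then
`x + y = w` and `(1 - x) e^x = (1 + y) e^{-y} =: S(w)`, so `1 - x < 1 < 1 + y` are the two points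
where `u ↦ u e^{1-u}` takes the value `S(w)`, and `S` decreases from `1` to `0`.

Writing `Σ_{k<n} n^k/k!` and `e^n (n-1)!` through the integrals of `t^{n-1} e^{-t}` over `(n, ∞)`
and `(0, ∞)`, and substituting `t = n (1 - x(w))` on `(0, n)` and `t = n (1 + y(w))` on `(n, ∞)`,
gives `σ(n) + 1/3 = ∫_0^∞ -(S^n)' ψ` with `ψ = 1/(2x) - 1/(2y)`. As `ψ → 1/3` at `0⁺` and
`S^n → 0` at `∞`, integration by parts yields `σ(n) = ∫_0^∞ S(w)^n ψ'(w) dw`. Finally `ψ' > 0`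
(equivalently `3t < 2 sinh t + tanh t` for `t = w/3`) and `0 < S < 1`, so the integrand is
positive, strictly decreasing in `n`, and tends to `0` under the integrable bound `ψ'`.
-/

open Real Set Filter Topology MeasureTheory
open scoped Nat

theorem one_sub_mul_exp_lt_one {x : ℝ} (hx : x ≠ 0) : (1 - x) * exp x < 1 := by
  have h := mul_lt_mul_of_pos_right (one_sub_lt_exp_neg hx) (exp_pos x)
  rwa [← exp_add, neg_add_cancel, exp_zero] at h

theorem Real.three_mul_lt_two_mul_sinh_add_tanh {t : ℝ} (ht : 0 < t) :
    3 * t < 2 * sinh t + tanh t := by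
  let g := fun t => 2 * sinh t + sinh t / cosh t - 3 * t
  have hg : ∀ t, HasDerivAt g (2 * cosh t + 1 / cosh t ^ 2 - 3) t := fun t => by
    refine ((((hasDerivAt_sinh t).const_mul 2).add ((hasDerivAt_sinh t).div (hasDerivAt_cosh t)
      (cosh_pos t).ne')).sub ((hasDerivAt_id t).const_mul 3)).congr_deriv ?_
    have := (cosh_pos t).ne'
    field_simp
    linear_combination cosh_sq_sub_sinh_sq t
  have hmono : StrictMonoOn g (Ici 0) := by
    refine strictMonoOn_of_hasDerivWithinAt_pos (convex_Ici 0)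
      (fun t _ => (hg t).continuousAt.continuousWithinAt) (fun t _ => (hg t).hasDerivWithinAt) ?_
    intro t ht
    rw [interior_Ici] at ht
    have hc := one_lt_cosh.2 (ne_of_gt ht)
    have : 0 < (cosh t - 1) ^ 2 * (2 * cosh t + 1) / cosh t ^ 2 := by positivity
    convert this using 1; field_simp; ring
  have := hmono self_mem_Ici ht.le ht
  simp only [g, sinh_zero, cosh_zero, div_one, mul_zero, sub_zero, add_zero] at this
  rw [tanh_eq_sinh_div_cosh]
  linarith

theorem nonneg_of_hasDerivAt_nonneg {f f' : ℝ → ℝ} {b : ℝ} (hf : ∀ x, HasDerivAt f (f' x) x)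
    (h0 : f 0 = 0) (hf' : ∀ x ∈ Ico 0 b, 0 ≤ f' x) : ∀ x ∈ Icc 0 b, 0 ≤ f x :=
  image_le_of_deriv_right_le_deriv_boundary continuousOn_const
    (fun _ _ => hasDerivWithinAt_const _ _ 0) h0.ge
    (fun x _ => (hf x).continuousAt.continuousWithinAt) (fun x _ => (hf x).hasDerivWithinAt) hf'

theorem mem_Icc_mul_pow_of_hasDerivAt {f f' : ℝ → ℝ} {C : ℝ} {k : ℕ}
    (hf : ∀ x, HasDerivAt f (f' x) x) (h0 : f 0 = 0)
    (hf' : ∀ x ∈ Icc (0 : ℝ) 1, f' x ∈ Icc 0 (C * x ^ k)) :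
    ∀ x ∈ Icc (0 : ℝ) 1, f x ∈ Icc 0 (C / (k + 1) * x ^ (k + 1)) := by
  have hB : ∀ x, HasDerivAt (fun x => C / (k + 1) * x ^ (k + 1)) (C * x ^ k) x := fun x => by
    refine ((hasDerivAt_pow (k + 1) x).const_mul _).congr_deriv ?_
    push_cast; field_simp
  intro x hx
  exact ⟨nonneg_of_hasDerivAt_nonneg hf h0 (fun y hy => (hf' y (Ico_subset_Icc_self hy)).1) x hx,
    image_le_of_deriv_right_le_deriv_boundary (fun y _ => (hf y).continuousAt.continuousWithinAt)
      (fun y _ => (hf y).hasDerivWithinAt) (by simp [h0])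
      (fun y _ => (hB y).continuousAt.continuousWithinAt) (fun y _ => (hB y).hasDerivWithinAt)
      (fun y hy => (hf' y (Ico_subset_Icc_self hy)).2) hx⟩

theorem exp_sub_one_pos {x : ℝ} (hx : 0 < x) : 0 < exp x - 1 := sub_pos.2 (one_lt_exp_iff.2 hx)

theorem exp_sub_one_sub_pos {x : ℝ} (hx : 0 < x) : 0 < exp x - 1 - x := by
  linarith [add_one_lt_exp hx.ne']

theorem mul_exp_sub_exp_add_one_pos {x : ℝ} (hx : 0 < x) : 0 < x * exp x - exp x + 1 := by
  linarith [one_sub_mul_exp_lt_one hx.ne']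

theorem sq_div_two_le_mul_exp_sub_exp_add_one {x : ℝ} (hx : 0 ≤ x) :
    x ^ 2 / 2 ≤ x * exp x - exp x + 1 := by
  have hd : ∀ x, HasDerivAt (fun x => x * exp x - exp x + 1 - x ^ 2 / 2) (x * (exp x - 1)) x :=
    fun x => (((((hasDerivAt_id x).mul (hasDerivAt_exp x)).sub (hasDerivAt_exp x)).add_const 1).sub
      ((hasDerivAt_pow 2 x).div_const 2)).congr_deriv (by simp only [one_mul, id_eq]; ring)
  have := nonneg_of_hasDerivAt_nonneg hd (by simp)
    (fun y hy => mul_nonneg hy.1 (sub_nonneg.2 (one_le_exp hy.1))) x ⟨hx, le_rfl⟩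
  linarith

theorem integrableOn_Ioi_deriv_of_nonneg_of_tendsto {g g' : ℝ → ℝ} {a l₀ l : ℝ}
    (h₀ : Tendsto g (𝓝[>] a) (𝓝 l₀)) (hderiv : ∀ x ∈ Ioi a, HasDerivAt g (g' x) x)
    (g'pos : ∀ x ∈ Ioi a, 0 ≤ g' x) (hg : Tendsto g atTop (𝓝 l)) : IntegrableOn g' (Ioi a) := by
  classical
  refine integrableOn_Ioi_deriv_of_nonneg (g := Function.update g a l₀) ?_ (fun x hx => ?_) g'pos
    (hg.congr' ?_)
  · rwa [continuousWithinAt_update_same, Ici_sdiff_left]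
  · exact (hderiv x hx).congr_of_eventuallyEq
      ((eventually_ne_nhds hx.out.ne').mono fun y hy => Function.update_of_ne hy _ _)
  · exact (eventually_gt_atTop a).mono fun y hy => (Function.update_of_ne hy.ne' _ _).symm

theorem integrableOn_and_integral_image_Ioi_eq {f f' g : ℝ → ℝ}
    (hf : ∀ w ∈ Ioi (0 : ℝ), HasDerivAt f (f' w) w) (hinj : InjOn f (Ioi 0))
    (hg : IntegrableOn g (f '' Ioi 0)) :
    IntegrableOn (fun w => |f' w| * g (f w)) (Ioi 0) ∧
      ∫ t in f '' Ioi 0, g t = ∫ w in Ioi 0, |f' w| * g (f w) := by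
  have hf' : ∀ w ∈ Ioi (0 : ℝ), HasDerivWithinAt f (f' w) (Ioi 0) w :=
    fun w hw => (hf w hw).hasDerivWithinAt
  exact ⟨(integrableOn_image_iff_integrableOn_abs_deriv_smul measurableSet_Ioi hf' hinj g).1 hg,
    integral_image_eq_integral_abs_deriv_smul measurableSet_Ioi hf' hinj g⟩

theorem setIntegral_Ioi_pos {f : ℝ → ℝ} {a : ℝ} (hf : IntegrableOn f (Ioi a))
    (hpos : ∀ x ∈ Ioi a, 0 < f x) : 0 < ∫ x in Ioi a, f x := by
  rw [setIntegral_pos_iff_support_of_nonneg_ae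
    (ae_restrict_of_forall_mem measurableSet_Ioi fun x hx => (hpos x hx).le) hf]
  exact (by simp : 0 < volume (Ioi a)).trans_le (measure_mono fun x hx => ⟨(hpos x hx).ne', hx⟩)

theorem hasDerivAt_factorial_mul_exp_neg_mul_sum_range (m : ℕ) (t : ℝ) :
    HasDerivAt (fun t => m ! * (exp (-t) * ∑ k ∈ Finset.range (m + 1), t ^ k / k !))
      (-(t ^ m * exp (-t))) t := by
  induction m with
  | zero => simpa using (hasDerivAt_neg t).exp
  | succ m ih =>
    have hF : (fun t => ((m + 1)! : ℝ) * (exp (-t) * ∑ k ∈ Finset.range (m + 2), t ^ k / k !)) =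
        fun t => (m + 1 : ℝ) * (m ! * (exp (-t) * ∑ k ∈ Finset.range (m + 1), t ^ k / k !)) +
          exp (-t) * t ^ (m + 1) := by
      ext t
      rw [Finset.sum_range_succ, Nat.factorial_succ]
      push_cast
      field_simp
    rw [hF]
    refine ((ih.const_mul _).fun_add ((hasDerivAt_neg t).exp.fun_mul
      (hasDerivAt_pow (m + 1) t))).congr_deriv ?_
    push_cast
    ring

theorem tendsto_exp_neg_mul_sum_range (m : ℕ) :
    Tendsto (fun t => exp (-t) * ∑ k ∈ Finset.range (m + 1), t ^ k / k !) atTop (𝓝 0) := by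
  simp_rw [Finset.mul_sum]
  rw [show (0 : ℝ) = ∑ k ∈ Finset.range (m + 1), 0 by simp]
  refine tendsto_finsetSum _ fun k _ => ?_
  convert (tendsto_pow_mul_exp_neg_atTop_nhds_zero k).div_const (k ! : ℝ) using 2 <;> ring

theorem integral_pow_mul_exp_neg (m : ℕ) (x : ℝ) :
    ∫ t in (0)..x, t ^ m * exp (-t) =
      m ! * (1 - exp (-x) * ∑ k ∈ Finset.range (m + 1), x ^ k / k !) := by
  rw [intervalIntegral.integral_eq_sub_of_hasDerivAt (fun t _ =>
    (hasDerivAt_factorial_mul_exp_neg_mul_sum_range m t).neg.congr_deriv (neg_neg _))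
    ((by fun_prop : Continuous fun t : ℝ => t ^ m * exp (-t)).intervalIntegrable _ _)]
  have h0 : ∑ k ∈ Finset.range (m + 1), (0 : ℝ) ^ k / k ! = 1 := by
    simp [Finset.sum_range_succ']
  simp only [Pi.neg_apply, neg_zero, exp_zero, one_mul, h0]
  ring

theorem integrableOn_and_integral_Ioi_pow_mul_exp_neg (m : ℕ) {x : ℝ} (hx : 0 ≤ x) :
    IntegrableOn (fun t => t ^ m * exp (-t)) (Ioi x) ∧
      ∫ t in Ioi x, t ^ m * exp (-t) =
        m ! * (exp (-x) * ∑ k ∈ Finset.range (m + 1), x ^ k / k !) := by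
  have hG : ∀ t ∈ Ici x, _ := fun t _ =>
    (hasDerivAt_factorial_mul_exp_neg_mul_sum_range m t).neg.congr_deriv (neg_neg _)
  have hlim := ((tendsto_exp_neg_mul_sum_range m).const_mul (m ! : ℝ)).neg
  rw [mul_zero, neg_zero] at hlim
  have hnn : ∀ t ∈ Ioi x, 0 ≤ t ^ m * exp (-t) := fun t ht =>
    mul_nonneg (pow_nonneg (hx.trans ht.out.le) m) (exp_pos _).le
  refine ⟨integrableOn_Ioi_deriv_of_nonneg' hG hnn hlim, ?_⟩
  rw [integral_Ioi_of_hasDerivAt_of_nonneg' hG hnn hlim]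
  simp

theorem pow_mul_exp_neg_mul (m : ℕ) (u : ℝ) :
    ((m + 1) * u) ^ m * exp (-((m + 1) * u)) =
      (m + 1) ^ m * exp (-(m + 1)) * ((u * exp (1 - u)) ^ m * exp (1 - u)) := by
  have h : exp (-((m + 1) * u)) = exp (-(m + 1)) * exp (m * (1 - u)) * exp (1 - u) := by
    rw [← exp_add, ← exp_add]; ring_nf
  rw [mul_pow, mul_pow, ← exp_nat_mul, h]
  ring

theorem sigmaSzego_succ_eq (m : ℕ) :
    sigmaSzego (m + 1) = (m + 1) * exp (m + 1) / (2 * (m + 1) ^ (m + 1)) *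
      ((∫ t in (0)..(m + 1 : ℝ), t ^ m * exp (-t)) - ∫ t in Ioi (m + 1 : ℝ), t ^ m * exp (-t))
        - 1 / 3 := by
  rw [integral_pow_mul_exp_neg,
    (integrableOn_and_integral_Ioi_pow_mul_exp_neg m (by positivity)).2, sigmaSzego]
  push_cast [Nat.factorial_succ, exp_neg]
  field_simp
  ring

namespace Szego

noncomputable def X (w : ℝ) : ℝ := (exp w - 1 - w) / (exp w - 1)

noncomputable def Y (w : ℝ) : ℝ := (w * exp w - exp w + 1) / (exp w - 1)

noncomputable def S (w : ℝ) : ℝ := (1 - X w) * exp (X w)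

noncomputable def Psi (w : ℝ) : ℝ := 1 / (2 * X w) - 1 / (2 * Y w)

noncomputable def H (w : ℝ) : ℝ := 2 * w ^ 2 + 8 + 2 * w * sinh w - 8 * cosh w

variable {w : ℝ}

theorem X_pos (hw : 0 < w) : 0 < X w := div_pos (exp_sub_one_sub_pos hw) (exp_sub_one_pos hw)

theorem Y_pos (hw : 0 < w) : 0 < Y w :=
  div_pos (mul_exp_sub_exp_add_one_pos hw) (exp_sub_one_pos hw)

theorem one_sub_X (hw : 0 < w) : 1 - X w = w / (exp w - 1) := by
  have := (exp_sub_one_pos hw).ne'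
  rw [X]; field_simp; ring

theorem X_add_Y (hw : 0 < w) : X w + Y w = w := by
  have := (exp_sub_one_pos hw).ne'
  rw [X, Y]; field_simp; ring

theorem X_lt_one (hw : 0 < w) : X w < 1 := by
  linarith [one_sub_X hw ▸ div_pos hw (exp_sub_one_pos hw)]

theorem X_lt (hw : 0 < w) : X w < w := by linarith [X_add_Y hw, Y_pos hw]

theorem Y_lt (hw : 0 < w) : Y w < w := by linarith [X_add_Y hw, X_pos hw]

theorem S_pos (hw : 0 < w) : 0 < S w := mul_pos (by linarith [X_lt_one hw]) (exp_pos _)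

theorem S_lt_one (hw : 0 < w) : S w < 1 := one_sub_mul_exp_lt_one (X_pos hw).ne'

theorem exp_mul_exp_neg_Y (hw : 0 < w) : exp w * exp (-Y w) = exp (X w) := by
  rw [← exp_add]; congr 1; linarith [X_add_Y hw]

theorem one_add_Y_mul_exp_neg_Y (hw : 0 < w) : (1 + Y w) * exp (-Y w) = S w := by
  have h : 1 + Y w = exp w * (1 - X w) := by
    have := (exp_sub_one_pos hw).ne'
    rw [one_sub_X hw, Y]; field_simp; ring
  rw [h, S, ← exp_mul_exp_neg_Y hw]
  ring

theorem hasDerivAt_X (hw : 0 < w) : HasDerivAt X (Y w / (exp w - 1)) w := by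
  have h := (exp_sub_one_pos hw).ne'
  have hn : HasDerivAt (fun w => exp w - 1 - w) (exp w - 1) w :=
    ((hasDerivAt_exp w).sub_const 1).sub (hasDerivAt_id w)
  refine (hn.div ((hasDerivAt_exp w).sub_const 1) h).congr_deriv ?_
  rw [Y]; field_simp; ring

theorem hasDerivAt_Y (hw : 0 < w) : HasDerivAt Y (exp w * X w / (exp w - 1)) w := by
  have h := (exp_sub_one_pos hw).ne'
  have hn : HasDerivAt (fun w => w * exp w - exp w + 1) (w * exp w) w :=
    (((hasDerivAt_id w).mul (hasDerivAt_exp w)).sub (hasDerivAt_exp w)).add_const 1 |>.congr_deriv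
      (by simp)
  refine (hn.div ((hasDerivAt_exp w).sub_const 1) h).congr_deriv ?_
  rw [X]; field_simp; ring

theorem hasDerivAt_S (hw : 0 < w) :
    HasDerivAt S (-(X w * Y w * exp (X w) / (exp w - 1))) w := by
  have h := hasDerivAt_X hw
  exact ((h.const_sub 1).mul h.exp).congr_deriv (by ring)

theorem continuousOn_X : ContinuousOn X (Ioi 0) :=
  fun _ hw => (hasDerivAt_X hw).continuousAt.continuousWithinAt

theorem continuousOn_Y : ContinuousOn Y (Ioi 0) :=
  fun _ hw => (hasDerivAt_Y hw).continuousAt.continuousWithinAt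

theorem continuousOn_S : ContinuousOn S (Ioi 0) :=
  fun _ hw => (hasDerivAt_S hw).continuousAt.continuousWithinAt

theorem strictMonoOn_X : StrictMonoOn X (Ioi 0) := by
  refine strictMonoOn_of_hasDerivWithinAt_pos (convex_Ioi 0) continuousOn_X
    (fun w hw => (hasDerivAt_X (interior_subset hw)).hasDerivWithinAt) fun w hw => ?_
  rw [interior_Ioi] at hw
  exact div_pos (Y_pos hw) (exp_sub_one_pos hw)

theorem strictMonoOn_Y : StrictMonoOn Y (Ioi 0) := by
  refine strictMonoOn_of_hasDerivWithinAt_pos (convex_Ioi 0) continuousOn_Y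
    (fun w hw => (hasDerivAt_Y (interior_subset hw)).hasDerivWithinAt) fun w hw => ?_
  rw [interior_Ioi] at hw
  exact div_pos (mul_pos (exp_pos w) (X_pos hw)) (exp_sub_one_pos hw)

theorem tendsto_X_nhdsGT_zero : Tendsto X (𝓝[>] 0) (𝓝 0) :=
  tendsto_of_tendsto_of_tendsto_of_le_of_le' tendsto_const_nhds
    (tendsto_nhdsWithin_of_tendsto_nhds tendsto_id)
    (eventually_nhdsWithin_of_forall fun _ hw => (X_pos hw).le)
    (eventually_nhdsWithin_of_forall fun _ hw => (X_lt hw).le)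

theorem tendsto_Y_nhdsGT_zero : Tendsto Y (𝓝[>] 0) (𝓝 0) :=
  tendsto_of_tendsto_of_tendsto_of_le_of_le' tendsto_const_nhds
    (tendsto_nhdsWithin_of_tendsto_nhds tendsto_id)
    (eventually_nhdsWithin_of_forall fun _ hw => (Y_pos hw).le)
    (eventually_nhdsWithin_of_forall fun _ hw => (Y_lt hw).le)

theorem tendsto_X_atTop : Tendsto X atTop (𝓝 1) := by
  have h : Tendsto (fun w => w * exp (-w) / (1 - exp (-w))) atTop (𝓝 0) := by
    convert (tendsto_pow_mul_exp_neg_atTop_nhds_zero 1).div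
      (tendsto_exp_neg_atTop_nhds_zero.const_sub 1) (by norm_num) using 2 <;> simp
  have h1 : Tendsto (fun w => 1 - w * exp (-w) / (1 - exp (-w))) atTop (𝓝 1) := by
    simpa using h.const_sub 1
  refine h1.congr' ((eventually_gt_atTop 0).mono fun w hw => ?_)
  have := (exp_sub_one_pos hw).ne'
  rw [← sub_sub_cancel 1 (X w), one_sub_X hw, exp_neg]
  field_simp

theorem tendsto_Y_atTop : Tendsto Y atTop atTop :=
  tendsto_atTop_mono' atTop ((eventually_gt_atTop 0).mono fun w hw => show w - 1 ≤ Y w by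
    linarith [X_add_Y hw, X_lt_one hw]) (tendsto_atTop_add_const_right atTop (-1) tendsto_id)

theorem tendsto_S_nhdsGT_zero : Tendsto S (𝓝[>] 0) (𝓝 1) := by
  have := (tendsto_X_nhdsGT_zero.const_sub 1).mul tendsto_X_nhdsGT_zero.rexp
  rwa [sub_zero, exp_zero, mul_one] at this

theorem tendsto_S_atTop : Tendsto S atTop (𝓝 0) := by
  have := (tendsto_X_atTop.const_sub 1).mul tendsto_X_atTop.rexp
  rwa [sub_self, zero_mul] at this

theorem image_mul_one_sub_X {c : ℝ} (hc : 0 < c) :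
    (fun w => c * (1 - X w)) '' Ioi 0 = Ioo 0 c := by
  refine Subset.antisymm (image_subset_iff.2 fun w hw => ?_) ?_
  · have := X_pos hw; have := X_lt_one hw
    show 0 < c * (1 - X w) ∧ c * (1 - X w) < c
    constructor <;> nlinarith
  · have h0 : Tendsto (fun w => c * (1 - X w)) (𝓝[>] 0) (𝓝 c) := by
      simpa using (tendsto_X_nhdsGT_zero.const_sub 1).const_mul c
    have htop : Tendsto (fun w => c * (1 - X w)) atTop (𝓝 0) := by
      simpa using (tendsto_X_atTop.const_sub 1).const_mul c
    exact isPreconnected_Ioi.intermediate_value_Ioo (le_principal_iff.2 (Ioi_mem_atTop 0))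
      (show 𝓝[>] (0 : ℝ) ≤ 𝓟 (Ioi 0) from inf_le_right)
      (continuousOn_const.mul (continuousOn_const.sub continuousOn_X)) htop h0

theorem image_mul_one_add_Y {c : ℝ} (hc : 0 < c) :
    (fun w => c * (1 + Y w)) '' Ioi 0 = Ioi c := by
  refine Subset.antisymm (image_subset_iff.2 fun w hw => ?_) ?_
  · have := Y_pos hw
    show c < c * (1 + Y w)
    nlinarith
  · have h0 : Tendsto (fun w => c * (1 + Y w)) (𝓝[>] 0) (𝓝 c) := by
      simpa using (tendsto_Y_nhdsGT_zero.const_add 1).const_mul c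
    exact isPreconnected_Ioi.intermediate_value_Ioi
      (show 𝓝[>] (0 : ℝ) ≤ 𝓟 (Ioi 0) from inf_le_right) (le_principal_iff.2 (Ioi_mem_atTop 0))
      (continuousOn_const.mul (continuousOn_const.add continuousOn_Y)) h0
      ((tendsto_atTop_add_const_left atTop 1 tendsto_Y_atTop).const_mul_atTop hc)

theorem integrableOn_and_integral_pow_mul_exp_neg_eq (m : ℕ) :
    IntegrableOn (fun w => S w ^ m * exp (X w) * Y w / (exp w - 1)) (Ioi 0) ∧
      ∫ t in (0)..(m + 1 : ℝ), t ^ m * exp (-t) =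
        (m + 1) ^ (m + 1) * exp (-(m + 1)) *
          ∫ w in Ioi 0, S w ^ m * exp (X w) * Y w / (exp w - 1) := by
  have hn : (0 : ℝ) < m + 1 := by positivity
  have hu : ∀ w ∈ Ioi (0 : ℝ), HasDerivAt (fun w => (m + 1 : ℝ) * (1 - X w))
      (-((m + 1) * (Y w / (exp w - 1)))) w :=
    fun w hw => ((hasDerivAt_X hw).const_sub 1).const_mul (m + 1 : ℝ) |>.congr_deriv (by ring)
  have hinj : InjOn (fun w => (m + 1 : ℝ) * (1 - X w)) (Ioi 0) := fun a ha b hb h =>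
    strictMonoOn_X.injOn ha hb (by linarith [mul_left_cancel₀ hn.ne' h])
  have hg : IntegrableOn (fun t => t ^ m * exp (-t)) (Ioo 0 (m + 1)) :=
    ((by fun_prop : Continuous fun t : ℝ => t ^ m * exp (-t)).integrableOn_Icc).mono_set
      Ioo_subset_Icc_self
  rw [← image_mul_one_sub_X hn] at hg
  obtain ⟨hint, heq⟩ := integrableOn_and_integral_image_Ioi_eq hu hinj hg
  have hpt : ∀ w ∈ Ioi (0 : ℝ), |-((m + 1) * (Y w / (exp w - 1)))| *
      (((m + 1) * (1 - X w)) ^ m * exp (-((m + 1) * (1 - X w)))) =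
        (m + 1) ^ (m + 1) * exp (-(m + 1)) * (S w ^ m * exp (X w) * Y w / (exp w - 1)) := by
    intro w hw
    rw [abs_neg, abs_of_pos (by have := Y_pos hw; have := exp_sub_one_pos hw; positivity),
      pow_mul_exp_neg_mul, sub_sub_cancel, S]
    ring
  refine ⟨(integrable_const_mul_iff (isUnit_iff_ne_zero.2 (by positivity)) _).1
    (hint.congr_fun hpt measurableSet_Ioi), ?_⟩
  rw [intervalIntegral.integral_of_le hn.le, integral_Ioc_eq_integral_Ioo,
    ← image_mul_one_sub_X hn, heq, setIntegral_congr_fun measurableSet_Ioi hpt,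
    integral_const_mul]

theorem integrableOn_and_integral_Ioi_pow_mul_exp_neg_eq (m : ℕ) :
    IntegrableOn (fun w => S w ^ m * exp (X w) * X w / (exp w - 1)) (Ioi 0) ∧
      ∫ t in Ioi (m + 1 : ℝ), t ^ m * exp (-t) =
        (m + 1) ^ (m + 1) * exp (-(m + 1)) *
          ∫ w in Ioi 0, S w ^ m * exp (X w) * X w / (exp w - 1) := by
  have hn : (0 : ℝ) < m + 1 := by positivity
  have hu : ∀ w ∈ Ioi (0 : ℝ), HasDerivAt (fun w => (m + 1 : ℝ) * (1 + Y w))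
      ((m + 1) * (exp w * X w / (exp w - 1))) w :=
    fun w hw => ((hasDerivAt_Y hw).const_add 1).const_mul (m + 1 : ℝ)
  have hinj : InjOn (fun w => (m + 1 : ℝ) * (1 + Y w)) (Ioi 0) := fun a ha b hb h =>
    strictMonoOn_Y.injOn ha hb (by linarith [mul_left_cancel₀ hn.ne' h])
  have hg := (integrableOn_and_integral_Ioi_pow_mul_exp_neg m hn.le).1
  rw [← image_mul_one_add_Y hn] at hg
  obtain ⟨hint, heq⟩ := integrableOn_and_integral_image_Ioi_eq hu hinj hg
  have hpt : ∀ w ∈ Ioi (0 : ℝ), |(m + 1) * (exp w * X w / (exp w - 1))| *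
      (((m + 1) * (1 + Y w)) ^ m * exp (-((m + 1) * (1 + Y w)))) =
        (m + 1) ^ (m + 1) * exp (-(m + 1)) * (S w ^ m * exp (X w) * X w / (exp w - 1)) := by
    intro w hw
    rw [abs_of_pos (by have := X_pos hw; have := exp_sub_one_pos hw; positivity),
      pow_mul_exp_neg_mul, show 1 - (1 + Y w) = -Y w by ring, one_add_Y_mul_exp_neg_Y hw,
      ← exp_mul_exp_neg_Y hw]
    ring
  refine ⟨(integrable_const_mul_iff (isUnit_iff_ne_zero.2 (by positivity)) _).1
    (hint.congr_fun hpt measurableSet_Ioi), ?_⟩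
  rw [← image_mul_one_add_Y hn, heq, setIntegral_congr_fun measurableSet_Ioi hpt,
    integral_const_mul]

theorem Y_lt_exp_mul_X (hw : 0 < w) : Y w < exp (w / 3) * X w := by
  obtain ⟨t, rfl⟩ : ∃ t, w = 3 * t := ⟨w / 3, by ring⟩
  -- multiplied by `2 e^{2t} cosh t`, this is `3t < 2 sinh t + tanh t`
  have h := three_mul_lt_two_mul_sinh_add_tanh (by linarith : 0 < t)
  rw [tanh_eq_sinh_div_cosh, sinh_eq, cosh_eq, exp_neg] at h
  have hE := exp_pos t
  have h3 : exp (3 * t) = exp t ^ 3 := by rw [← exp_nat_mul]; norm_num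
  rw [X, Y, mul_div_assoc', div_lt_div_iff_of_pos_right (exp_sub_one_pos hw),
    mul_div_cancel_left₀ t three_ne_zero, h3]
  field_simp at h
  nlinarith

theorem hasDerivAt_Psi (hw : 0 < w) :
    HasDerivAt Psi ((exp w * X w ^ 3 - Y w ^ 3) / (2 * X w ^ 2 * Y w ^ 2 * (exp w - 1))) w := by
  have hx := (X_pos hw).ne'
  have hy := (Y_pos hw).ne'
  have he := (exp_sub_one_pos hw).ne'
  have h := (((hasDerivAt_X hw).const_mul 2).inv (by positivity)).sub
    (((hasDerivAt_Y hw).const_mul 2).inv (by positivity))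
  refine (h.congr_of_eventuallyEq (Eventually.of_forall fun w => ?_)).congr_deriv ?_
  · simp [Psi]
  · field_simp; ring

theorem deriv_Psi_pos (hw : 0 < w) : 0 < deriv Psi w := by
  have hx := X_pos hw
  have hy := Y_pos hw
  have he := exp_sub_one_pos hw
  have hcube : Y w ^ 3 < exp w * X w ^ 3 := by
    calc Y w ^ 3 < (exp (w / 3) * X w) ^ 3 :=
          pow_lt_pow_left₀ (Y_lt_exp_mul_X hw) hy.le (by norm_num)
      _ = exp w * X w ^ 3 := by rw [mul_pow, ← exp_nat_mul]; push_cast; ring_nf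
  rw [(hasDerivAt_Psi hw).deriv]
  exact div_pos (by linarith) (by positivity)

theorem tendsto_Psi_atTop : Tendsto Psi atTop (𝓝 (1 / 2)) := by
  show Tendsto (fun w => 1 / (2 * X w) - 1 / (2 * Y w)) atTop _
  have hX := tendsto_const_nhds (x := (1 : ℝ)).div (tendsto_X_atTop.const_mul 2) (by norm_num)
  have hY := tendsto_const_nhds (x := (1 : ℝ)).div_atTop (tendsto_Y_atTop.const_mul_atTop two_pos)
  convert hX.sub hY using 2 <;> norm_num

theorem Psi_sub_one_third (hw : 0 < w) :
    Psi w - 1 / 3 = exp w * H w / (6 * (exp w - 1 - w) * (w * exp w - exp w + 1)) := by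
  have := (exp_sub_one_pos hw).ne'
  have h1 := (exp_sub_one_sub_pos hw).ne'
  have h2 := (mul_exp_sub_exp_add_one_pos hw).ne'
  have h2' : exp w * (w - 1) + 1 ≠ 0 := by linarith [mul_exp_sub_exp_add_one_pos hw]
  rw [eq_div_iff (mul_ne_zero (mul_ne_zero (by norm_num) h1) h2), Psi, X, Y, H, sinh_eq, cosh_eq,
    exp_neg]
  field_simp
  ring

theorem H_mem_Icc (hw : w ∈ Icc (0 : ℝ) 1) : H w ∈ Icc 0 (w ^ 5 / 20) := by
  have d3 : ∀ w, HasDerivAt (fun w => 2 * w * cosh w - 2 * sinh w) (2 * w * sinh w) w := fun w =>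
    ((((hasDerivAt_id w).const_mul 2).mul (hasDerivAt_cosh w)).sub
      ((hasDerivAt_sinh w).const_mul 2)).congr_deriv (by simp)
  have d2 : ∀ w, HasDerivAt (fun w => 4 + 2 * w * sinh w - 4 * cosh w)
      (2 * w * cosh w - 2 * sinh w) w := fun w =>
    (((((hasDerivAt_id w).const_mul 2).mul (hasDerivAt_sinh w)).const_add 4).sub
      ((hasDerivAt_cosh w).const_mul 4)).congr_deriv (by simp only [mul_one, id_eq]; ring)
  have d1 : ∀ w, HasDerivAt (fun w => 4 * w + 2 * w * cosh w - 6 * sinh w)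
      (4 + 2 * w * sinh w - 4 * cosh w) w := fun w =>
    ((((hasDerivAt_id w).const_mul 4).add (((hasDerivAt_id w).const_mul 2).mul
      (hasDerivAt_cosh w))).sub ((hasDerivAt_sinh w).const_mul 6)).congr_deriv
      (by simp only [mul_one, id_eq]; ring)
  have d0 : ∀ w, HasDerivAt H (4 * w + 2 * w * cosh w - 6 * sinh w) w := fun w =>
    (((((hasDerivAt_pow 2 w).const_mul 2).add_const 8).add (((hasDerivAt_id w).const_mul 2).mul
      (hasDerivAt_sinh w))).sub ((hasDerivAt_cosh w).const_mul 8)).congr_deriv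
      (by simp only [Nat.cast_ofNat, Nat.add_one_sub_one, pow_one, mul_one, id_eq]; ring)
  have b4 : ∀ w ∈ Icc (0 : ℝ) 1, 2 * w * sinh w ∈ Icc 0 (6 * w ^ 1) := fun w hw => by
    have hs : 0 ≤ sinh w := sinh_nonneg_iff.2 hw.1
    have hc : sinh w ≤ 3 := by
      have h1 : exp w ≤ exp 1 := exp_le_exp.2 hw.2
      have h2 : exp (-w) ≤ 1 := exp_le_one_iff.2 (by linarith [hw.1])
      linarith [sinh_lt_cosh w, cosh_eq w, exp_one_lt_d9]
    constructor <;> nlinarith [hw.1]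
  have b3 := mem_Icc_mul_pow_of_hasDerivAt d3 (by simp) b4
  have b2 := mem_Icc_mul_pow_of_hasDerivAt d2 (by simp) b3
  have b1 := mem_Icc_mul_pow_of_hasDerivAt d1 (by simp) b2
  have b0 := mem_Icc_mul_pow_of_hasDerivAt d0 (by simp [H]) b1 w hw
  convert b0 using 2; ring

theorem Psi_sub_one_third_mem_Icc (hw : w ∈ Ioc (0 : ℝ) 1) : Psi w - 1 / 3 ∈ Icc 0 w := by
  have hw' : w ∈ Icc (0 : ℝ) 1 := Ioc_subset_Icc_self hw
  have hD1 : w ^ 2 / 2 ≤ exp w - 1 - w := by linarith [quadratic_le_exp_of_nonneg hw'.1]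
  have hD2 := sq_div_two_le_mul_exp_sub_exp_add_one hw'.1
  have hH := H_mem_Icc hw'
  have hexp : exp w ≤ 3 := (exp_le_exp.2 hw.2).trans (by linarith [exp_one_lt_d9])
  have hD : 0 < 6 * (exp w - 1 - w) * (w * exp w - exp w + 1) :=
    mul_pos (mul_pos (by norm_num) (exp_sub_one_sub_pos hw.1)) (mul_exp_sub_exp_add_one_pos hw.1)
  rw [Psi_sub_one_third hw.1]
  refine ⟨div_nonneg (mul_nonneg (exp_pos w).le hH.1) hD.le, (div_le_iff₀ hD).2 ?_⟩
  calc exp w * H w ≤ 3 * (w ^ 5 / 20) := mul_le_mul hexp hH.2 hH.1 (by norm_num)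
    _ ≤ w * (6 * (w ^ 2 / 2) * (w ^ 2 / 2)) := by nlinarith [pow_nonneg hw'.1 5]
    _ ≤ w * (6 * (exp w - 1 - w) * (w * exp w - exp w + 1)) :=
        mul_le_mul_of_nonneg_left (mul_le_mul (by linarith) hD2 (by positivity)
          (by linarith [exp_sub_one_sub_pos hw.1])) hw'.1

theorem tendsto_Psi_nhdsGT_zero : Tendsto Psi (𝓝[>] 0) (𝓝 (1 / 3)) := by
  have hmem : ∀ᶠ w in 𝓝[>] (0 : ℝ), Psi w - 1 / 3 ∈ Icc 0 w :=
    Filter.mem_of_superset (Ioc_mem_nhdsGT zero_lt_one) fun w hw => Psi_sub_one_third_mem_Icc hw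
  have h : Tendsto (fun w => Psi w - 1 / 3) (𝓝[>] 0) (𝓝 0) :=
    tendsto_of_tendsto_of_tendsto_of_le_of_le' tendsto_const_nhds
      (tendsto_nhdsWithin_of_tendsto_nhds tendsto_id) (hmem.mono fun _ h => h.1)
      (hmem.mono fun _ h => h.2)
  have := h.add_const (1 / 3)
  rw [zero_add] at this
  exact this.congr fun w => sub_add_cancel _ _

theorem integrableOn_deriv_Psi : IntegrableOn (deriv Psi) (Ioi 0) :=
  integrableOn_Ioi_deriv_of_nonneg_of_tendsto tendsto_Psi_nhdsGT_zero
    (fun _ hw => (hasDerivAt_Psi hw).differentiableAt.hasDerivAt)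
    (fun _ hw => (deriv_Psi_pos hw).le) tendsto_Psi_atTop

theorem integrableOn_pow_S_mul_deriv_Psi (n : ℕ) :
    IntegrableOn (fun w => S w ^ n * deriv Psi w) (Ioi 0) :=
  integrableOn_deriv_Psi.bdd_mul ((continuousOn_S.pow n).aestronglyMeasurable measurableSet_Ioi)
    (ae_restrict_of_forall_mem measurableSet_Ioi fun w hw => by
      rw [norm_pow, Real.norm_of_nonneg (S_pos hw).le]
      exact pow_le_one₀ (S_pos hw).le (S_lt_one hw).le)

end Szego

open Szego

theorem sigmaSzego_succ_add_one_third (m : ℕ) :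
    IntegrableOn (fun w => (m + 1) * S w ^ m * (X w * Y w * exp (X w) / (exp w - 1)) * Psi w)
      (Ioi 0) ∧
    sigmaSzego (m + 1) + 1 / 3 =
      ∫ w in Ioi 0, (m + 1) * S w ^ m * (X w * Y w * exp (X w) / (exp w - 1)) * Psi w := by
  obtain ⟨hA, hAeq⟩ := integrableOn_and_integral_pow_mul_exp_neg_eq m
  obtain ⟨hB, hBeq⟩ := integrableOn_and_integral_Ioi_pow_mul_exp_neg_eq m
  have hpt : ∀ w ∈ Ioi (0 : ℝ),
      (m + 1) * S w ^ m * (X w * Y w * exp (X w) / (exp w - 1)) * Psi w =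
        (m + 1) / 2 * (S w ^ m * exp (X w) * Y w / (exp w - 1) -
          S w ^ m * exp (X w) * X w / (exp w - 1)) := by
    intro w hw
    have := (X_pos hw).ne'; have := (Y_pos hw).ne'
    rw [Psi]; field_simp
  refine ⟨IntegrableOn.congr_fun ((hA.sub hB).const_mul _) (fun w hw => (hpt w hw).symm)
    measurableSet_Ioi, ?_⟩
  rw [setIntegral_congr_fun measurableSet_Ioi hpt, integral_const_mul, integral_sub hA hB,
    sigmaSzego_succ_eq, hAeq, hBeq, exp_neg]
  field_simp
  ring

theorem sigmaSzego_succ_eq_integral (m : ℕ) :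
    sigmaSzego (m + 1) = ∫ w in Ioi 0, S w ^ (m + 1) * deriv Psi w := by
  obtain ⟨hint, hsigma⟩ := sigmaSzego_succ_add_one_third m
  have hu : ∀ w ∈ Ioi (0 : ℝ), HasDerivAt (fun w => S w ^ (m + 1))
      (-((m + 1) * S w ^ m * (X w * Y w * exp (X w) / (exp w - 1)))) w := fun w hw =>
    ((hasDerivAt_S hw).pow (m + 1)).congr_deriv (by push_cast; simp)
  have hv : ∀ w ∈ Ioi (0 : ℝ), HasDerivAt Psi (deriv Psi w) w :=
    fun w hw => (hasDerivAt_Psi hw).differentiableAt.hasDerivAt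
  have h0 : Tendsto (fun w => S w ^ (m + 1) * Psi w) (𝓝[>] 0) (𝓝 (1 / 3)) := by
    simpa using (tendsto_S_nhdsGT_zero.pow (m + 1)).mul tendsto_Psi_nhdsGT_zero
  have htop : Tendsto (fun w => S w ^ (m + 1) * Psi w) atTop (𝓝 0) := by
    simpa using (tendsto_S_atTop.pow (m + 1)).mul tendsto_Psi_atTop
  rw [integral_Ioi_mul_deriv_eq_deriv_mul hu hv (integrableOn_pow_S_mul_deriv_Psi (m + 1))
    (by simpa [Pi.mul_def, neg_mul] using hint.neg) h0 htop]
  simp only [neg_mul, integral_neg]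
  linarith

theorem sigmaSzego_pos {n : ℕ} (hn : 1 ≤ n) : 0 < sigmaSzego n := by
  obtain ⟨m, rfl⟩ := Nat.exists_eq_add_of_le' hn
  rw [sigmaSzego_succ_eq_integral]
  exact setIntegral_Ioi_pos (integrableOn_pow_S_mul_deriv_Psi _)
    fun w hw => mul_pos (pow_pos (S_pos hw) _) (deriv_Psi_pos hw)

theorem sigmaSzego_succ_lt {n : ℕ} (hn : 1 ≤ n) : sigmaSzego (n + 1) < sigmaSzego n := by
  obtain ⟨m, rfl⟩ := Nat.exists_eq_add_of_le' hn
  have hint := integrableOn_pow_S_mul_deriv_Psi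
  rw [← sub_pos, sigmaSzego_succ_eq_integral, sigmaSzego_succ_eq_integral,
    ← integral_sub (hint _) (hint _)]
  refine setIntegral_Ioi_pos ((hint _).sub (hint _)) fun w hw => ?_
  rw [← sub_mul]
  exact mul_pos (sub_pos.2 (pow_lt_pow_right_of_lt_one₀ (S_pos hw) (S_lt_one hw) (by omega)))
    (deriv_Psi_pos hw)

theorem tendsto_sigmaSzego_atTop : Tendsto sigmaSzego atTop (𝓝 0) := by
  rw [← tendsto_add_atTop_iff_nat 1]
  simp_rw [sigmaSzego_succ_eq_integral]
  have hbound : ∀ n, ∀ w ∈ Ioi (0 : ℝ), ‖S w ^ (n + 1) * deriv Psi w‖ ≤ deriv Psi w :=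
    fun n w hw => by
      rw [norm_mul, norm_pow, Real.norm_of_nonneg (S_pos hw).le,
        Real.norm_of_nonneg (deriv_Psi_pos hw).le]
      exact mul_le_of_le_one_left (deriv_Psi_pos hw).le
        (pow_le_one₀ (S_pos hw).le (S_lt_one hw).le)
  have hlim : ∀ w ∈ Ioi (0 : ℝ),
      Tendsto (fun n => S w ^ (n + 1) * deriv Psi w) atTop (𝓝 0) := fun w hw => by
    simpa using ((tendsto_pow_atTop_nhds_zero_of_lt_one (S_pos hw).le (S_lt_one hw)).comp
      (tendsto_add_atTop_nat 1)).mul_const (deriv Psi w)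
  simpa using tendsto_integral_of_dominated_convergence (deriv Psi)
    (fun n => (integrableOn_pow_S_mul_deriv_Psi (n + 1)).aestronglyMeasurable)
    integrableOn_deriv_Psi (fun n => ae_restrict_of_forall_mem measurableSet_Ioi (hbound n))
    (ae_restrict_of_forall_mem measurableSet_Ioi hlim)

theorem sigma_pos_strict_anti_tendsto_zero :
    (∀ n : ℕ, 1 ≤ n → 0 < sigmaSzego n) ∧
    (∀ n : ℕ, 1 ≤ n → sigmaSzego (n + 1) < sigmaSzego n) ∧
    Filter.Tendsto sigmaSzego Filter.atTop (nhds 0) :=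
  ⟨fun _ => sigmaSzego_pos, fun _ => sigmaSzego_succ_lt, tendsto_sigmaSzego_atTop⟩
end

section
/- For all integers i ≥ 1 and n ≥ 1, the sums S_i(n) satisfy the recursion S_i(n) = n·Σ_{k=0}^{i-1} C(i-1,k)·S_k(n) − n^i·a_{n-1}(n), where C(i-1,k) denotes the binomial coefficient and a_{n-1}(n) = n^{n-1}/(n-1)!. -/
/-- `S_i(n) = Σ_{k=0}^{n-1} (n^k/k!)·k^i` (for `i = 0` the `k = 0` term is `0^0 = 1`). -/
noncomputable def S (i n : ℕ) : ℝ :=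
  ∑ k ∈ Finset.range n, ((n : ℝ) ^ k / (k.factorial : ℝ)) * (k : ℝ) ^ i

/-!
Since `k · n^k / k! = n · n^(k-1) / (k-1)!`, shifting the index turns `S_i(n)` into
`n · Σ_{k<n-1} (n^k / k!) (k+1)^(i-1)`; expanding `(k+1)^(i-1)` binomially gives the sums
`S_t(n)` except for their top terms `k = n - 1`, which add up to `a_{n-1}(n) · n^(i-1)`.
-/

open Finset

theorem add_one_pow_eq_sum_choose_mul_pow {R : Type*} [CommSemiring R] (x : R) (j : ℕ) :
    (x + 1) ^ j = ∑ t ∈ range (j + 1), (j.choose t : R) * x ^ t := by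
  simp only [add_pow, one_pow, mul_one, mul_comm]

theorem sum_mul_add_one_pow {R : Type*} [CommSemiring R] (f : ℕ → R) (s : Finset ℕ) (j : ℕ) :
    ∑ k ∈ s, f k * ((k : R) + 1) ^ j =
      ∑ t ∈ range (j + 1), (j.choose t : R) * ∑ k ∈ s, f k * (k : R) ^ t := by
  simp_rw [add_one_pow_eq_sum_choose_mul_pow, mul_sum]
  rw [sum_comm]
  exact sum_congr rfl fun _ _ => sum_congr rfl fun _ _ => by ring

theorem pow_succ_div_factorial_mul_pow_succ {K : Type*} [Field K] [CharZero K] (x : K) (k j : ℕ) :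
    x ^ (k + 1) / (k + 1).factorial * ((k + 1 : ℕ) : K) ^ (j + 1) =
      x * (x ^ k / k.factorial * ((k : K) + 1) ^ j) := by
  rw [Nat.factorial_succ]
  push_cast
  field_simp
  ring

theorem sum_range_succ_pow_div_factorial_mul_pow_succ {K : Type*} [Field K] [CharZero K]
    (x : K) (m j : ℕ) :
    ∑ k ∈ range (m + 1), x ^ k / k.factorial * (k : K) ^ (j + 1) =
      x * ∑ k ∈ range m, x ^ k / k.factorial * ((k : K) + 1) ^ j := by
  simp only [sum_range_succ', pow_succ_div_factorial_mul_pow_succ, Nat.cast_zero, ne_eq,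
    Nat.add_one_ne_zero, not_false_eq_true, zero_pow, mul_zero, add_zero, mul_sum]

theorem S_recursion (i n : ℕ) (hi : 1 ≤ i) (hn : 1 ≤ n) :
    S i n =
      (n : ℝ) * ∑ k ∈ Finset.range i, ((i - 1).choose k : ℝ) * S k n -
        (n : ℝ) ^ i * ((n : ℝ) ^ (n - 1) / ((n - 1).factorial : ℝ)) := by
  obtain ⟨j, rfl⟩ := Nat.exists_eq_add_of_le' hi
  obtain ⟨m, rfl⟩ := Nat.exists_eq_add_of_le' hn
  set a : ℕ → ℝ := fun k => ((m + 1 : ℕ) : ℝ) ^ k / k.factorial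
  have S_eq (t : ℕ) : S t (m + 1) = ∑ k ∈ range m, a k * (k : ℝ) ^ t + a m * (m : ℝ) ^ t :=
    sum_range_succ _ _
  calc S (j + 1) (m + 1)
      = ((m + 1 : ℕ) : ℝ) * ∑ k ∈ range m, a k * ((k : ℝ) + 1) ^ j :=
        sum_range_succ_pow_div_factorial_mul_pow_succ _ m j
    _ = ((m + 1 : ℕ) : ℝ) *
          ∑ t ∈ range (j + 1), (j.choose t : ℝ) * (S t (m + 1) - a m * (m : ℝ) ^ t) := by
        simp_rw [sum_mul_add_one_pow, S_eq, add_sub_cancel_right]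
    _ = _ := by
        simp_rw [mul_sub, sum_sub_distrib, mul_left_comm _ (a m), ← mul_sum,
          ← add_one_pow_eq_sum_choose_mul_pow]
        simp only [a, Nat.add_sub_cancel]
        push_cast
        ring
end

section
/- For each fixed integer i ≥ 0, S_i(n) = Θ(e^n · n^i) as n → ∞; that is, there exist constants c₁, c₂ > 0 and N such that c₁·e^n·n^i ≤ S_i(n) ≤ c₂·e^n·n^i for all n ≥ N. -/
open Finset Real
open scoped Nat

theorem Nat.factorial_le_exp_one_mul_sqrt_mul_pow {n : ℕ} (hn : n ≠ 0) :
    (n ! : ℝ) ≤ exp 1 * √n * (n / exp 1) ^ n := by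
  obtain ⟨m, rfl⟩ := Nat.exists_eq_add_one_of_ne_zero hn
  have hseq : Stirling.stirlingSeq (m + 1) ≤ exp 1 / √2 :=
    Stirling.stirlingSeq_one ▸ Stirling.stirlingSeq'_antitone (Nat.zero_le m)
  rw [Stirling.stirlingSeq, div_le_iff₀ (by positivity), Real.sqrt_mul zero_le_two] at hseq
  refine hseq.trans (le_of_eq ?_)
  field_simp

theorem pow_div_factorial_mul_div_pow_le {n k : ℕ} (hkn : k ≤ n) :
    (n : ℝ) ^ n / n ! * (k / n) ^ (n - k) ≤ (n : ℝ) ^ k / k ! := by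
  rcases Nat.eq_zero_or_pos n with rfl | hn
  · simp [Nat.le_zero.mp hkn]
  have hfac : (k ! * k ^ (n - k) : ℝ) ≤ n ! := by
    exact_mod_cast Nat.factorial_mul_pow_sub_le_factorial hkn
  have hsplit : (n : ℝ) ^ n = n ^ k * n ^ (n - k) := by rw [← pow_add, Nat.add_sub_cancel' hkn]
  have hlhs : (n : ℝ) ^ n / n ! * (k / n) ^ (n - k) = n ^ k * k ^ (n - k) / n ! := by
    rw [div_pow, hsplit]
    field_simp
  rw [hlhs, div_le_div_iff₀ (by positivity) (by positivity), mul_assoc]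
  exact mul_le_mul_of_nonneg_left (by linarith) (by positivity)

theorem one_sub_sq_div_le_div_pow {n k : ℕ} (hkn : k ≤ n) :
    1 - ((n - k : ℕ) : ℝ) ^ 2 / n ≤ ((k : ℝ) / n) ^ (n - k) := by
  rcases Nat.eq_zero_or_pos n with rfl | hn
  · simp [Nat.le_zero.mp hkn]
  have hkn' : (k : ℝ) ≤ n := by exact_mod_cast hkn
  have hbern := one_add_mul_le_pow (a := (k : ℝ) / n - 1) (by
    have : (0 : ℝ) ≤ k / n := by positivity
    linarith) (n - k)
  have hcast : ((n - k : ℕ) : ℝ) = n - k := by push_cast [hkn]; ring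
  rw [add_sub_cancel] at hbern
  refine le_trans (le_of_eq ?_) hbern
  rw [hcast]
  field_simp
  ring

theorem three_fourths_mul_le_pow_div_factorial_mul_pow {i n k : ℕ} (hkn : k ≤ n)
    (hwidth : 4 * (n - k) ^ 2 ≤ n) :
    3 / 4 * ((n : ℝ) ^ n / n !) * (n / 2) ^ i ≤ (n : ℝ) ^ k / k ! * k ^ i := by
  have hwidth' : 4 * ((n - k : ℕ) : ℝ) ^ 2 ≤ n := by exact_mod_cast hwidth
  have hratio : 3 / 4 ≤ ((k : ℝ) / n) ^ (n - k) := by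
    refine le_trans ?_ (one_sub_sq_div_le_div_pow hkn)
    rcases Nat.eq_zero_or_pos n with rfl | hn
    · norm_num
    rw [le_sub_comm, div_le_iff₀ (by positivity)]
    linarith
  have hhalf : (n : ℝ) / 2 ≤ k := by
    have hsq : n - k ≤ (n - k) ^ 2 := Nat.le_self_pow two_ne_zero _
    have : ((n - k : ℕ) : ℝ) ≤ n / 2 := by
      have : ((n - k : ℕ) : ℝ) ≤ ((n - k : ℕ) : ℝ) ^ 2 := by exact_mod_cast hsq
      linarith
    push_cast [hkn] at this
    linarith
  calc 3 / 4 * ((n : ℝ) ^ n / n !) * (n / 2) ^ i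
      ≤ (n : ℝ) ^ n / n ! * (k / n) ^ (n - k) * k ^ i := by
        rw [mul_comm (3 / 4 : ℝ)]
        gcongr
    _ ≤ (n : ℝ) ^ k / k ! * k ^ i := by
        gcongr
        exact pow_div_factorial_mul_div_pow_le hkn

theorem mul_pow_div_factorial_mul_pow_le_S (i : ℕ) {n m : ℕ} (hm : 4 * m ^ 2 ≤ n) :
    m * (3 / 4 * ((n : ℝ) ^ n / n !) * (n / 2) ^ i) ≤ S i n := by
  have hmn : m ≤ n := (Nat.le_self_pow two_ne_zero m).trans (by omega)
  have hterm : ∀ k ∈ Ico (n - m) n,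
      3 / 4 * ((n : ℝ) ^ n / n !) * (n / 2) ^ i ≤ (n : ℝ) ^ k / k ! * k ^ i := by
    intro k hk
    rw [mem_Ico] at hk
    refine three_fourths_mul_le_pow_div_factorial_mul_pow hk.2.le (le_trans ?_ hm)
    gcongr
    omega
  calc (m : ℝ) * (3 / 4 * ((n : ℝ) ^ n / n !) * (n / 2) ^ i)
      = #(Ico (n - m) n) • (3 / 4 * ((n : ℝ) ^ n / n !) * (n / 2) ^ i) := by
        rw [Nat.card_Ico, Nat.sub_sub_self hmn, nsmul_eq_mul]
    _ ≤ ∑ k ∈ Ico (n - m) n, (n : ℝ) ^ k / k ! * k ^ i := card_nsmul_le_sum _ _ _ hterm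
    _ ≤ S i n := by
        refine sum_le_sum_of_subset_of_nonneg ?_ (fun _ _ _ ↦ by positivity)
        exact fun k hk ↦ mem_range.mpr (mem_Ico.mp hk).2

theorem exists_four_mul_sq_le_and_sqrt_le {n : ℕ} (hn : 4 ≤ n) :
    ∃ m : ℕ, 4 * m ^ 2 ≤ n ∧ √n ≤ 4 * m := by
  refine ⟨Nat.sqrt n / 2, ?_, ?_⟩
  · calc 4 * (Nat.sqrt n / 2) ^ 2 = (2 * (Nat.sqrt n / 2)) ^ 2 := by ring
      _ ≤ Nat.sqrt n ^ 2 := Nat.pow_le_pow_left (Nat.mul_div_le _ 2) 2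
      _ ≤ n := Nat.sqrt_le' n
  · have h2 : 2 ≤ Nat.sqrt n := Nat.le_sqrt.mpr hn
    have : Nat.sqrt n + 1 ≤ 4 * (Nat.sqrt n / 2) := by omega
    exact Real.real_sqrt_lt_nat_sqrt_succ.le.trans (by exact_mod_cast this)

theorem S_le_exp_mul_pow (i n : ℕ) : S i n ≤ exp n * n ^ i := by
  calc S i n ≤ ∑ k ∈ range n, (n : ℝ) ^ k / k ! * n ^ i := by
        refine sum_le_sum fun k hk ↦ ?_
        gcongr
        exact_mod_cast (mem_range.mp hk).le
    _ = (∑ k ∈ range n, (n : ℝ) ^ k / k !) * n ^ i := (sum_mul ..).symm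
    _ ≤ exp n * n ^ i := by
        gcongr
        exact Real.sum_le_exp_of_nonneg (Nat.cast_nonneg n) n

theorem exp_mul_pow_le_S (i : ℕ) {n : ℕ} (hn : 4 ≤ n) :
    3 / (16 * exp 1 * 2 ^ i) * exp n * n ^ i ≤ S i n := by
  obtain ⟨m, hm, hsqrt⟩ := exists_four_mul_sq_le_and_sqrt_le hn
  have hstirling : exp n ≤ exp 1 * √n * ((n : ℝ) ^ n / n !) := by
    have := Nat.factorial_le_exp_one_mul_sqrt_mul_pow (n := n) (by omega)
    rw [div_pow, exp_one_pow, mul_div_assoc', le_div_iff₀ (exp_pos _)] at this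
    rw [mul_div_assoc', le_div_iff₀ (by positivity)]
    linarith
  calc 3 / (16 * exp 1 * 2 ^ i) * exp n * n ^ i
      = 3 / 16 * exp n / exp 1 * (n / 2) ^ i := by
        rw [div_pow]
        field_simp
    _ ≤ 3 / 16 * (√n * ((n : ℝ) ^ n / n !)) * (n / 2) ^ i := by
        gcongr
        rw [div_le_iff₀ (exp_pos 1)]
        linarith
    _ ≤ 3 / 16 * (4 * m * ((n : ℝ) ^ n / n !)) * (n / 2) ^ i := by gcongr
    _ = m * (3 / 4 * ((n : ℝ) ^ n / n !) * (n / 2) ^ i) := by ring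
    _ ≤ S i n := mul_pow_div_factorial_mul_pow_le_S i hm

theorem S_isTheta_exp_mul_pow (i : ℕ) :
    ∃ c₁ c₂ : ℝ, 0 < c₁ ∧ 0 < c₂ ∧ ∃ N : ℕ, ∀ n : ℕ, N ≤ n →
      c₁ * Real.exp n * (n : ℝ) ^ i ≤ S i n ∧ S i n ≤ c₂ * Real.exp n * (n : ℝ) ^ i :=
  ⟨3 / (16 * exp 1 * 2 ^ i), 1, by positivity, one_pos, 4, fun n hn ↦
    ⟨exp_mul_pow_le_S i hn, by simpa only [one_mul] using S_le_exp_mul_pow i n⟩⟩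
end

section
/- For all integers i ≥ 0 and positive integers n, R_i(n) = (n!/n^{n+1}) · Σ_{l=0}^{i+1} (−1)^l · C(i+1,l) · n^{i+1−l} · S_l(n). -/
/-- `p_k(n) = n!·k/((n−k)!·n^(k+1))`. -/
noncomputable def p (n k : ℕ) : ℝ :=
  (n.factorial : ℝ) * k / (((n - k).factorial : ℝ) * (n : ℝ) ^ (k + 1))

/-- `R_i(n) = Σ_{k=1}^{n} p_k(n)·k^i`. -/
noncomputable def R (i n : ℕ) : ℝ := ∑ k ∈ Finset.Icc 1 n, p n k * (k : ℝ) ^ i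

/-! Substituting `j = n - k` turns `R_i(n)` into `n!/n^(n+1) · Σ_{j<n} (n^j/j!)·(n - j)^(i+1)`;
expanding `(n - j)^(i+1)` by the binomial theorem and exchanging the two sums gives the
alternating combination of the `S_l(n)`. -/

open Finset

theorem sub_pow_eq_sum_neg_one_pow {A : Type*} [CommRing A] (x y : A) (m : ℕ) :
    (x - y) ^ m = ∑ l ∈ range (m + 1), (-1) ^ l * (m.choose l : A) * x ^ (m - l) * y ^ l := by
  rw [sub_eq_neg_add, add_pow]
  refine sum_congr rfl fun l _ => ?_
  rw [neg_pow]
  ring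

theorem p_mul_pow_eq {n k : ℕ} (hk : k ∈ Icc 1 n) (i : ℕ) :
    p n k * (k : ℝ) ^ i = (n.factorial : ℝ) / (n : ℝ) ^ (n + 1) *
      ((n : ℝ) ^ (n - k) / ((n - k).factorial : ℝ) * (k : ℝ) ^ (i + 1)) := by
  obtain ⟨hk1, hkn⟩ := mem_Icc.mp hk
  have hn : (n : ℝ) ≠ 0 := Nat.cast_ne_zero.mpr (by omega)
  have hpow : (n : ℝ) ^ (n + 1) = (n : ℝ) ^ (k + 1) * (n : ℝ) ^ (n - k) := by
    rw [← pow_add]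
    congr 1
    omega
  rw [p, hpow, pow_succ (k : ℝ) i]
  field_simp

theorem R_eq_mul_sum_sub_pow (i n : ℕ) :
    R i n = (n.factorial : ℝ) / (n : ℝ) ^ (n + 1) *
      ∑ j ∈ range n, (n : ℝ) ^ j / (j.factorial : ℝ) * ((n : ℝ) - j) ^ (i + 1) := by
  rw [R, mul_sum]
  refine sum_nbij' (fun k => n - k) (fun j => n - j) ?_ ?_ ?_ ?_ fun k hk => by
    rw [p_mul_pow_eq hk, Nat.cast_sub (mem_Icc.mp hk).2, sub_sub_cancel]
  all_goals
    intro x hx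
    simp only [mem_Icc, mem_range] at hx ⊢
    omega

theorem sum_mul_sub_pow_eq_sum_S (n m : ℕ) :
    ∑ j ∈ range n, (n : ℝ) ^ j / (j.factorial : ℝ) * ((n : ℝ) - j) ^ m =
      ∑ l ∈ range (m + 1), (-1 : ℝ) ^ l * (m.choose l : ℝ) * (n : ℝ) ^ (m - l) * S l n := by
  simp only [sub_pow_eq_sum_neg_one_pow, mul_sum, S]
  rw [sum_comm]
  refine sum_congr rfl fun l _ => sum_congr rfl fun j _ => ?_
  ring

theorem R_eq_alternating_sum_S_general (i n : ℕ) :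
    R i n = ((n.factorial : ℝ) / (n : ℝ) ^ (n + 1)) *
      ∑ l ∈ Finset.range (i + 2),
        (-1 : ℝ) ^ l * ((i + 1).choose l : ℝ) * (n : ℝ) ^ (i + 1 - l) * S l n := by
  rw [R_eq_mul_sum_sub_pow, sum_mul_sub_pow_eq_sum_S]

theorem R_eq_alternating_sum_S (i n : ℕ) (hn : 1 ≤ n) :
    R i n = ((n.factorial : ℝ) / (n : ℝ) ^ (n + 1)) *
      ∑ l ∈ Finset.range (i + 2),
        (-1 : ℝ) ^ l * ((i + 1).choose l : ℝ) * (n : ℝ) ^ (i + 1 - l) * S l n :=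
  R_eq_alternating_sum_S_general i n
end

section
/- For every positive integer n, Σ_{k=1}^{n} n!·k/((n−k)!·n^{k+1}) = 1; that is, the probabilities p_k(n), 1 ≤ k ≤ n, sum to 1 (equivalently R_0(n) = 1). -/
/-! The term `p_k(n)` is the probability that the first repeat among uniform draws from `n` items
occurs at draw `k + 1`. Writing `q_k = n(n-1)⋯(n-k+1)/n^k` for the probability that the first `k`
draws are distinct, `p_k = q_k - q_{k+1}`, so the sum telescopes to `q_1 - q_{n+1} = 1 - 0`. -/

open Nat Finset

theorem Nat.cast_descFactorial_succ {R : Type*} [CommRing R] (n k : ℕ) :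
    (n.descFactorial (k + 1) : R) = ((n : R) - k) * n.descFactorial k := by
  rcases le_or_gt k n with hk | hk
  · rw [descFactorial_succ, cast_mul, cast_sub hk]
  · rw [descFactorial_of_lt hk, descFactorial_of_lt (by omega), cast_zero, mul_zero]

noncomputable def distinctDrawsProb (n k : ℕ) : ℝ := n.descFactorial k / (n : ℝ) ^ k

theorem distinctDrawsProb_one {n : ℕ} (hn : n ≠ 0) : distinctDrawsProb n 1 = 1 := by
  simp [distinctDrawsProb, hn]

theorem distinctDrawsProb_succ_self (n : ℕ) : distinctDrawsProb n (n + 1) = 0 := by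
  simp [distinctDrawsProb]

theorem distinctDrawsProb_sub_succ {n : ℕ} (hn : n ≠ 0) (k : ℕ) :
    distinctDrawsProb n k - distinctDrawsProb n (k + 1) =
      n.descFactorial k * k / (n : ℝ) ^ (k + 1) := by
  have hn' : (n : ℝ) ≠ 0 := cast_ne_zero.mpr hn
  rw [distinctDrawsProb, distinctDrawsProb, cast_descFactorial_succ]
  field_simp
  ring

theorem factorial_mul_div_eq_distinctDrawsProb_sub_succ {n k : ℕ} (hn : n ≠ 0) (hk : k ≤ n) :
    (n ! : ℝ) * k / ((n - k)! * (n : ℝ) ^ (k + 1)) =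
      distinctDrawsProb n k - distinctDrawsProb n (k + 1) := by
  rw [distinctDrawsProb_sub_succ hn, ← factorial_mul_descFactorial hk, cast_mul, mul_assoc,
    mul_div_mul_left _ _ (cast_ne_zero.mpr (factorial_ne_zero _))]

theorem sum_p_eq_one (n : ℕ) (hn : 1 ≤ n) :
    ∑ k ∈ Finset.Icc 1 n,
        (n.factorial : ℝ) * k / (((n - k).factorial : ℝ) * (n : ℝ) ^ (k + 1)) = 1 := by
  have hn0 : n ≠ 0 := by omega
  calc ∑ k ∈ Icc 1 n, (n ! : ℝ) * k / ((n - k)! * (n : ℝ) ^ (k + 1))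
      = ∑ k ∈ Icc 1 n, (distinctDrawsProb n k - distinctDrawsProb n (k + 1)) :=
        sum_congr rfl fun k hk ↦
          factorial_mul_div_eq_distinctDrawsProb_sub_succ hn0 (mem_Icc.mp hk).2
    _ = -∑ k ∈ Icc 1 n, (distinctDrawsProb n (k + 1) - distinctDrawsProb n k) := by
        rw [← sum_neg_distrib]; simp only [neg_sub]
    _ = 1 := by
        rw [sum_Icc_sub hn, distinctDrawsProb_succ_self, distinctDrawsProb_one hn0]; ring
end

section
/- Let m ≥ 2 be an integer and n = m². Then (m/(2n)) · Σ_{k=1}^{n} (k!/n^k) · Σ_{i=0}^{k} C(m,i)·C(n−m,k−i)·i·(i+1) = (2m + 1 + R_1(n))/(2m + 2). -/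
/-!
Write `(x)_j` for the falling factorial and put `a_k = (n)_k / n^k`, the probability that `k`
uniform draws from `n` values are pairwise distinct. Since `i (i + 1) = (i)_2 + 2 (i)_1`, the
weighted Vandermonde identity `∑ᵢ C(m,i) C(N,k-i) (i)_j = (m)_j C(m+N-j, k-j)` turns the `k`-th
summand into `((m)_2 (k)_2 / (n)_2 + 2 m k / n) a_k`. Finally `k a_k = n (a_k - a_{k+1})`
telescopes to `∑ k a_k = n`, while `∑ k² a_k = n R_1(n)`.
-/

/-- `R_1(n) = Σ_{k=1}^{n} n!·k²/((n−k)!·n^(k+1))`. -/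
noncomputable def R1 (n : ℕ) : ℝ :=
  ∑ k ∈ Finset.Icc 1 n,
    (n.factorial : ℝ) * (k : ℝ) ^ 2 / (((n - k).factorial : ℝ) * (n : ℝ) ^ (k + 1))

open Finset

namespace Nat

theorem choose_add_mul_descFactorial (m j x : ℕ) :
    m.choose (j + x) * (j + x).descFactorial j = m.descFactorial j * (m - j).choose x := by
  rw [descFactorial_eq_factorial_mul_choose, descFactorial_eq_factorial_mul_choose,
    mul_left_comm, choose_mul (Nat.le_add_right j x), Nat.add_sub_cancel_left]
  ring

theorem sum_range_choose_mul_choose_mul_descFactorial (m N j k : ℕ) (hjk : j ≤ k) :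
    ∑ i ∈ range (k + 1), m.choose i * N.choose (k - i) * i.descFactorial j
      = m.descFactorial j * (m - j + N).choose (k - j) := by
  obtain ⟨l, rfl⟩ := Nat.exists_eq_add_of_le hjk
  have hlow : ∀ i ∈ range j, m.choose i * N.choose (j + l - i) * i.descFactorial j = 0 := by
    intro i hi
    rw [descFactorial_eq_zero_iff_lt.mpr (mem_range.mp hi), Nat.mul_zero]
  rw [Nat.add_assoc, sum_range_add, sum_eq_zero hlow, Nat.zero_add, Nat.add_sub_cancel_left,
    add_choose_eq, Nat.sum_antidiagonal_eq_sum_range_succ_mk, mul_sum]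
  refine sum_congr rfl fun x _ => ?_
  rw [Nat.add_sub_add_left, mul_right_comm, choose_add_mul_descFactorial]
  ring

theorem factorial_mul_choose_mul_descFactorial {n j k : ℕ} (hjk : j ≤ k) :
    k ! * (n - j).choose (k - j) * n.descFactorial j = k.descFactorial j * n.descFactorial k := by
  rw [← factorial_mul_descFactorial hjk, ← descFactorial_mul_descFactorial hjk,
    descFactorial_eq_factorial_mul_choose (n - j) (k - j)]
  ring

end Nat

noncomputable def distinctProb (n k : ℕ) : ℝ := n.descFactorial k / (n : ℝ) ^ k

lemma mul_distinctProb_eq (n k : ℕ) (hn : n ≠ 0) :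
    k * distinctProb n k = n * (distinctProb n k - distinctProb n (k + 1)) := by
  rcases le_or_gt k n with hkn | hnk
  · simp only [distinctProb, Nat.descFactorial_succ, pow_succ, Nat.cast_mul, Nat.cast_sub hkn]
    field_simp
    ring
  · simp [distinctProb, Nat.descFactorial_eq_zero_iff_lt.mpr hnk]

lemma sum_Icc_mul_distinctProb (n : ℕ) (hn : n ≠ 0) :
    ∑ k ∈ Icc 1 n, k * distinctProb n k = n := by
  rw [← Ico_add_one_right_eq_Icc, sum_Ico_eq_sum_range, Nat.add_sub_cancel]
  simp only [mul_distinctProb_eq n _ hn, ← mul_sum, add_comm 1]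
  rw [sum_range_sub' (fun k => distinctProb n (k + 1))]
  simp [distinctProb, hn]

lemma R1_eq_sum_distinctProb (n : ℕ) :
    R1 n = (∑ k ∈ Icc 1 n, (k : ℝ) ^ 2 * distinctProb n k) / n := by
  rw [R1, sum_div]
  refine sum_congr rfl fun k hk => ?_
  rw [← Nat.factorial_mul_descFactorial (mem_Icc.mp hk).2, distinctProb]
  have : ((n - k).factorial : ℝ) ≠ 0 := by positivity
  push_cast
  field_simp
  ring

lemma factorial_div_pow_mul_sum_choose_mul_descFactorial {m n j k : ℕ} (hjm : j ≤ m)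
    (hmn : m ≤ n) (hkn : k ≤ n) :
    (k.factorial / n ^ k : ℝ) * ∑ i ∈ range (k + 1),
        (m.choose i : ℝ) * ((n - m).choose (k - i) : ℝ) * (i.descFactorial j : ℝ)
      = m.descFactorial j * k.descFactorial j / n.descFactorial j * distinctProb n k := by
  rcases le_or_gt j k with hjk | hkj
  · have hsum : ∑ i ∈ range (k + 1),
          (m.choose i : ℝ) * ((n - m).choose (k - i) : ℝ) * (i.descFactorial j : ℝ)
        = m.descFactorial j * (n - j).choose (k - j) := by
      have := Nat.sum_range_choose_mul_choose_mul_descFactorial m (n - m) j k hjk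
      rw [show m - j + (n - m) = n - j by omega] at this
      exact_mod_cast this
    have hn : (n.descFactorial j : ℝ) ≠ 0 := by
      exact_mod_cast (Nat.descFactorial_pos.mpr (hjk.trans hkn)).ne'
    have hquot : (k.descFactorial j * n.descFactorial k / n.descFactorial j : ℝ)
        = k.factorial * (n - j).choose (k - j) := by
      rw [div_eq_iff hn]
      exact_mod_cast (Nat.factorial_mul_choose_mul_descFactorial hjk).symm
    rw [hsum, distinctProb]
    linear_combination (-(m.descFactorial j / n ^ k : ℝ)) * hquot
  · have hzero : ∀ i ∈ range (k + 1),
        (m.choose i : ℝ) * ((n - m).choose (k - i) : ℝ) * (i.descFactorial j : ℝ) = 0 := by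
      intro i hi
      rw [Nat.descFactorial_eq_zero_iff_lt.mpr ((mem_range_succ_iff.mp hi).trans_lt hkj)]
      simp
    simp [sum_eq_zero hzero, Nat.descFactorial_eq_zero_iff_lt.mpr hkj]

lemma sum_factorial_div_pow_mul_sum_choose {m n : ℕ} (hm : 2 ≤ m) (hmn : m ≤ n) :
    ∑ k ∈ Icc 1 n, ((k.factorial : ℝ) / (n : ℝ) ^ k) * ∑ i ∈ range (k + 1),
        (m.choose i : ℝ) * ((n - m).choose (k - i) : ℝ) * (i : ℝ) * ((i : ℝ) + 1)
      = m * (m - 1) * (R1 n - 1) / (n - 1) + 2 * m := by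
  have hn : (n : ℝ) ≠ 0 := by norm_cast; omega
  have hn1 : (n : ℝ) - 1 ≠ 0 := by
    have : (2 : ℝ) ≤ n := by exact_mod_cast hm.trans hmn
    linarith
  have hsplit : ∀ i : ℕ, (i : ℝ) * (i + 1) = i.descFactorial 2 + 2 * i.descFactorial 1 := by
    intro i
    rw [Nat.cast_descFactorial_two, Nat.descFactorial_one]
    ring
  have hterm : ∀ k ∈ Icc 1 n, ((k.factorial : ℝ) / (n : ℝ) ^ k) * ∑ i ∈ range (k + 1),
        (m.choose i : ℝ) * ((n - m).choose (k - i) : ℝ) * (i : ℝ) * ((i : ℝ) + 1)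
      = m * (m - 1) / (n * (n - 1)) * ((k : ℝ) ^ 2 * distinctProb n k - k * distinctProb n k)
        + 2 * m / n * (k * distinctProb n k) := by
    intro k hk
    have hkn := (mem_Icc.mp hk).2
    simp only [mul_assoc _ (_ : ℝ) (_ + 1), hsplit, mul_add, sum_add_distrib,
      mul_left_comm _ (2 : ℝ), ← mul_sum]
    rw [factorial_div_pow_mul_sum_choose_mul_descFactorial hm hmn hkn,
      factorial_div_pow_mul_sum_choose_mul_descFactorial (by omega) hmn hkn]
    simp only [Nat.cast_descFactorial_two, Nat.descFactorial_one]
    field_simp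
  rw [sum_congr rfl hterm, sum_add_distrib, ← mul_sum, ← mul_sum, sum_sub_distrib,
    sum_Icc_mul_distinctProb n (by omega), R1_eq_sum_distinctProb]
  field_simp

theorem bucket_expected_value_formula (m n : ℕ) (hm : 2 ≤ m) (hn : n = m ^ 2) :
    ((m : ℝ) / (2 * (n : ℝ))) *
        ∑ k ∈ Finset.Icc 1 n, ((k.factorial : ℝ) / (n : ℝ) ^ k) *
          ∑ i ∈ Finset.range (k + 1),
            (m.choose i : ℝ) * ((n - m).choose (k - i) : ℝ) * (i : ℝ) * ((i : ℝ) + 1)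
      = (2 * (m : ℝ) + 1 + R1 n) / (2 * (m : ℝ) + 2) := by
  have hmn : m ≤ n := hn ▸ Nat.le_self_pow two_ne_zero m
  have hm2 : (2 : ℝ) ≤ m := by exact_mod_cast hm
  have hm1 : (m : ℝ) ^ 2 - 1 ≠ 0 := by nlinarith
  rw [sum_factorial_div_pow_mul_sum_choose hm hmn]
  subst hn
  push_cast
  field_simp
  ring
end
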